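/- arXiv:2310.12983 — 7 statements merged into one kernel-verified Lean document; each statement's English description precedes it below -/
import Mathlib

section
/- Let m ≥ 4. Any social choice function for m candidates satisfying neutrality (N) also satisfies the duel property (DP). -/
/-! A neutral rule commutes with every relabelling of the candidates, so its outcome on a profile
is fixed by every relabelling that fixes the profile. A duel between `i` and `j` is fixed by the
transposition of any two candidates outside `{i, j}`; with at least four candidates, a winner `k`
outside `{i, j}` could thus be swapped with a fourth candidate `l`, forcing `k = l`. -/

/-- A voting profile for `m` candidates: a finite list of ballots, where a ballot
is `none` (abstention) or `some k` (a vote for candidate `k : Fin m`). -/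
abbrev Profile (m : ℕ) := List (Option (Fin m))

/-- `votes P k` is the number of ballots in `P` for candidate `k` (Σ_k(P)). -/
def votes {m : ℕ} (P : Profile m) (k : Fin m) : ℕ := P.count (some k)

/-- Anonymity (A): the outcome is invariant under permutations of the voters. -/
def Anonymous {m : ℕ} (f : Profile m → Option (Fin m)) : Prop :=
  ∀ P P' : Profile m, P.Perm P' → f P = f P'

/-- Neutrality (N): relabelling the candidates by a permutation relabels the outcome. -/
def Neutral {m : ℕ} (f : Profile m → Option (Fin m)) : Prop :=
  ∀ (τ : Equiv.Perm (Fin m)) (P : Profile m),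
    f (P.map (Option.map τ)) = Option.map τ (f P)

/-- Duel property (DP): if every ballot is an abstention or a vote for `i` or `j`,
then the outcome is a tie or a win of `i` or `j`. -/
def DuelProperty {m : ℕ} (f : Profile m → Option (Fin m)) : Prop :=
  ∀ (i j : Fin m) (P : Profile m),
    (∀ b ∈ P, b = none ∨ b = some i ∨ b = some j) →
    (f P = none ∨ f P = some i ∨ f P = some j)

/-- Pareto optimality (PO): if candidate `k` receives at least one vote and all other
candidates receive none, then `k` wins. -/
def ParetoOptimal {m : ℕ} (f : Profile m → Option (Fin m)) : Prop :=
  ∀ (P : Profile m) (k : Fin m),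
    0 < votes P k → (∀ l : Fin m, l ≠ k → votes P l = 0) → f P = some k

/-- Reducibility to subsocieties (RS): for every profile with at least 2 voters,
the outcome equals the outcome on the profile of outcomes of all subsocieties
obtained by removing one voter. -/
def Reducible {m : ℕ} (f : Profile m → Option (Fin m)) : Prop :=
  ∀ P : Profile m, 2 ≤ P.length →
    f P = f (List.ofFn fun l : Fin P.length => f (P.eraseIdx (l : ℕ)))

/-- The majority rule: `some k*` if `k*` has strictly more votes than every other
candidate, and `none` (a tie) otherwise. -/
noncomputable def Maj {m : ℕ} (P : Profile m) : Option (Fin m) :=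
  if h : ∃ k : Fin m, ∀ l : Fin m, l ≠ k → votes P l < votes P k
  then some h.choose else none

namespace Neutral

variable {m : ℕ} {f : Profile m → Option (Fin m)}

theorem map_apply_of_map_eq (hN : Neutral f) {τ : Equiv.Perm (Fin m)} {P : Profile m}
    (hP : P.map (Option.map τ) = P) : Option.map τ (f P) = f P := by
  rw [← hN, hP]

theorem apply_ne_some_of_notMem (hN : Neutral f) {P : Profile m} {k l : Fin m} (hkl : k ≠ l)
    (hk : some k ∉ P) (hl : some l ∉ P) : f P ≠ some k := by
  intro hfk
  have hfix : P.map (Option.map (Equiv.swap k l)) = P := by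
    refine (List.map_congr_left fun b hb => ?_).trans (List.map_id P)
    rcases b with _ | c
    · rfl
    · have hck : c ≠ k := by rintro rfl; exact hk hb
      have hcl : c ≠ l := by rintro rfl; exact hl hb
      simp [Equiv.swap_apply_of_ne_of_ne hck hcl]
  have h := hN.map_apply_of_map_eq hfix
  rw [hfk, Option.map_some, Equiv.swap_apply_left, Option.some_inj] at h
  exact hkl h.symm

end Neutral

/-- For `m ≥ 4`, any social choice function satisfying neutrality (N)
also satisfies the duel property (DP). -/
theorem stmt_0 (m : ℕ) (hm : 4 ≤ m) (f : Profile m → Option (Fin m))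
    (hN : Neutral f) : DuelProperty f := by
  intro i j P hP
  have hnotMem : ∀ c, c ≠ i → c ≠ j → some c ∉ P := fun c hci hcj hc => by
    rcases hP _ hc with h | h | h <;> simp_all
  rcases hfP : f P with _ | k
  · exact Or.inl rfl
  by_contra! hij
  have hki : k ≠ i := fun h => hij.2.1 (by rw [h])
  have hkj : k ≠ j := fun h => hij.2.2 (by rw [h])
  obtain ⟨l, -, hl⟩ := Finset.exists_mem_notMem_of_card_lt_card (s := {i, j, k})
    (t := Finset.univ) (by simpa using Finset.card_le_three.trans_lt (by omega))
  simp only [Finset.mem_insert, Finset.mem_singleton, not_or] at hl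
  exact hN.apply_ne_some_of_notMem (Ne.symm hl.2.2) (hnotMem k hki hkj)
    (hnotMem l hl.1 hl.2.1) hfP
end

section
/- Let f be a social choice function for m ≥ 2 candidates satisfying anonymity (A) and neutrality (N). If P is a voting profile in which two distinct candidates i and j receive the same number of votes, i.e., Σ_i(P) = Σ_j(P) with i ≠ j, then f(P) ≠ some i and f(P) ≠ some j. -/
theorem List.perm_map_swap_of_count_eq {α : Type*} [DecidableEq α] [BEq α] [LawfulBEq α]
    (l : List α) {a b : α} (h : l.count a = l.count b) : (l.map (Equiv.swap a b)).Perm l := by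
  rw [List.perm_iff_count]
  intro c
  rw [← Equiv.swap_apply_self a b c,
    List.count_map_of_injective _ _ (Equiv.swap a b).injective, Equiv.swap_apply_self]
  rcases eq_or_ne c a with rfl | hca
  · rw [Equiv.swap_apply_left, h]
  rcases eq_or_ne c b with rfl | hcb
  · rw [Equiv.swap_apply_right, h]
  · rw [Equiv.swap_apply_of_ne_of_ne hca hcb]

theorem Profile.perm_map_swap_of_votes_eq {m : ℕ} (P : Profile m) {i j : Fin m}
    (h : votes P i = votes P j) : (P.map (Option.map (Equiv.swap i j))).Perm P := by
  have hswap : (Option.map (Equiv.swap i j) : Option (Fin m) → Option (Fin m)) =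
      Equiv.swap (some i) (some j) := by
    rw [← Equiv.optionCongr_swap]; rfl
  rw [hswap]
  exact P.perm_map_swap_of_count_eq h

theorem Neutral.map_apply_eq_of_map_perm {m : ℕ} {f : Profile m → Option (Fin m)}
    (hN : Neutral f) (hA : Anonymous f) {τ : Equiv.Perm (Fin m)} {P : Profile m}
    (hP : (P.map (Option.map τ)).Perm P) : Option.map τ (f P) = f P := by
  rw [← hN τ P, hA _ _ hP]

theorem stmt_1_general (m : ℕ) (f : Profile m → Option (Fin m))
    (hA : Anonymous f) (hN : Neutral f)
    (P : Profile m) (i j : Fin m) (hij : i ≠ j)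
    (htie : votes P i = votes P j) :
    f P ≠ some i ∧ f P ≠ some j := by
  have hfix := hN.map_apply_eq_of_map_perm hA (P.perm_map_swap_of_votes_eq htie)
  constructor <;> intro hwin <;> simp [hwin, Equiv.swap_apply_left, Equiv.swap_apply_right] at hfix
  · exact hij hfix.symm
  · exact hij hfix

/-- Under (A) and (N), candidates that are tied cannot win. -/
theorem stmt_1 (m : ℕ) (hm : 2 ≤ m) (f : Profile m → Option (Fin m))
    (hA : Anonymous f) (hN : Neutral f)
    (P : Profile m) (i j : Fin m) (hij : i ≠ j)
    (htie : votes P i = votes P j) :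
    f P ≠ some i ∧ f P ≠ some j :=
  stmt_1_general m f hA hN P i j hij htie
end

section
/- For every m ≥ 2, the majority voting rule Maj, viewed as a social choice function for m candidates, satisfies anonymity (A), neutrality (N), the duel property (DP), Pareto optimality (PO) and reducibility to subsocieties (RS). -/
/-! Removing one ballot lowers one tally by at most one. If `k` is the strict majority winner,
no subsociety elects anyone else and some subsociety still elects `k`, so Pareto optimality
makes `k` the winner of the profile of subsociety outcomes. If there is a tie and some
subsociety elects `c`, then `c` and exactly one other candidate `d` share the top tally,
strictly ahead of everyone else: every subsociety electing `c` arises by removing a `d`-ballot,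
and removing any `c`-ballot elects `d`. So `d` gets at least as many votes as `c` among the
subsociety outcomes, and `c` is not the majority winner there. -/

open List

lemma List.count_ofFn_le_count_ofFn {α β : Type*} [BEq α] [LawfulBEq α] [BEq β] [LawfulBEq β]
    {n : ℕ} {f : Fin n → α} {g : Fin n → β} {a : α} {b : β} (h : ∀ i, f i = a → g i = b) :
    (ofFn f).count a ≤ (ofFn g).count b := by
  induction n with
  | zero => simp
  | succ n ih =>
    simp only [ofFn_succ, count_cons]
    have := ih (fun i => h i.succ)
    have := h 0
    grind

section

variable {m : ℕ}

lemma maj_eq_some_iff {P : Profile m} {k : Fin m} :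
    Maj P = some k ↔ ∀ l, l ≠ k → votes P l < votes P k := by
  unfold Maj
  split_ifs with h
  · refine ⟨?_, fun hk => congrArg some ?_⟩
    · rintro ⟨⟩; exact h.choose_spec
    · by_contra hne
      exact lt_asymm (h.choose_spec k (Ne.symm hne)) (hk _ hne)
  · exact ⟨nofun, fun hk => (h ⟨k, hk⟩).elim⟩

lemma maj_eq_none_iff {P : Profile m} :
    Maj P = none ↔ ∀ k, ∃ l, l ≠ k ∧ votes P k ≤ votes P l := by
  simp only [Option.eq_none_iff_forall_ne_some, ne_eq, maj_eq_some_iff]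
  push Not
  rfl

lemma mem_of_maj_eq_some {P : Profile m} {k l : Fin m} (h : Maj P = some k) (hl : l ≠ k) :
    some k ∈ P :=
  count_pos_iff.1 (Nat.zero_lt_of_lt (maj_eq_some_iff.1 h l hl))

theorem anonymous_maj : Anonymous (Maj (m := m)) := by
  intro P P' h
  have : votes P = votes P' := funext fun k => h.count_eq (some k)
  unfold Maj
  rw [this]

lemma votes_map_apply (τ : Equiv.Perm (Fin m)) (P : Profile m) (k : Fin m) :
    votes (P.map (Option.map τ)) (τ k) = votes P k :=
  count_map_of_injective P _ (Option.map_injective τ.injective) (some k)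

lemma maj_map_eq_some_iff (τ : Equiv.Perm (Fin m)) (P : Profile m) (k : Fin m) :
    Maj (P.map (Option.map τ)) = some (τ k) ↔ Maj P = some k := by
  rw [maj_eq_some_iff, maj_eq_some_iff, ← τ.forall_congr_right]
  simp only [τ.injective.ne_iff, votes_map_apply]

theorem neutral_maj : Neutral (Maj (m := m)) := by
  intro τ P
  cases h : Maj P with
  | some k => exact (maj_map_eq_some_iff τ P k).2 h
  | none =>
    refine Option.eq_none_iff_forall_ne_some.2 fun c hc => ?_
    rw [← τ.apply_symm_apply c, maj_map_eq_some_iff, h] at hc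
    cases hc

theorem duelProperty_maj : DuelProperty (Maj (m := m)) := by
  intro i j P hP
  rcases h : Maj P with _ | c
  · exact Or.inl rfl
  by_cases hci : c = i
  · exact Or.inr (Or.inl (congrArg some hci))
  rcases hP _ (mem_of_maj_eq_some h (Ne.symm hci)) with hc | hc | hc
  · cases hc
  · exact Or.inr (Or.inl hc)
  · exact Or.inr (Or.inr hc)

theorem paretoOptimal_maj : ParetoOptimal (Maj (m := m)) := by
  intro P k hk hother
  exact maj_eq_some_iff.2 fun l hl => (hother l hl).symm ▸ hk

section Reducible

variable {P : Profile m} {i : ℕ}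

lemma votes_eraseIdx_add (hi : i < P.length) (c : Fin m) :
    votes (P.eraseIdx i) c + (if P[i] = some c then 1 else 0) = votes P c := by
  rw [votes, votes, ← (getElem_cons_eraseIdx_perm hi).count_eq, count_cons]
  simp only [beq_iff_eq]

lemma votes_eraseIdx_le (hi : i < P.length) (c : Fin m) : votes (P.eraseIdx i) c ≤ votes P c := by
  have := votes_eraseIdx_add hi c
  omega

lemma votes_eraseIdx_of_ne (hi : i < P.length) {c : Fin m} (h : P[i] ≠ some c) :
    votes (P.eraseIdx i) c = votes P c := by
  simpa [h] using votes_eraseIdx_add hi c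

lemma votes_eraseIdx_add_one (hi : i < P.length) {c : Fin m} (h : P[i] = some c) :
    votes (P.eraseIdx i) c + 1 = votes P c := by
  simpa [h] using votes_eraseIdx_add hi c

lemma eq_of_maj_eraseIdx_eq_some (hi : i < P.length) {k c : Fin m} (hk : Maj P = some k)
    (hc : Maj (P.eraseIdx i) = some c) : c = k := by
  by_contra hne
  have := maj_eq_some_iff.1 hc k (Ne.symm hne)
  have := maj_eq_some_iff.1 hk c hne
  have := votes_eraseIdx_le hi c
  have := votes_eraseIdx_add hi k
  split_ifs at * <;> omega

lemma exists_maj_eraseIdx_eq_some {k : Fin m} (hk : Maj P = some k) (hP : 2 ≤ P.length) :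
    ∃ l : Fin P.length, Maj (P.eraseIdx l) = some k := by
  by_cases hall : ∀ b ∈ P, b = some k
  · refine ⟨⟨0, by omega⟩, maj_eq_some_iff.2 fun e he => ?_⟩
    dsimp only
    have hk_len : votes P k = P.length := count_eq_length.2 fun b hb => (hall b hb).symm
    have he_zero : votes P e = 0 := count_eq_zero.2 fun h => he (Option.some_injective _ (hall _ h))
    have := votes_eraseIdx_le (P := P) (i := 0) (by omega) e
    have := votes_eraseIdx_add_one (P := P) (i := 0) (by omega) (hall _ (getElem_mem _))
    omega
  · push Not at hall
    obtain ⟨b, hb, hbk⟩ := hall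
    obtain ⟨i, hi, rfl⟩ := getElem_of_mem hb
    refine ⟨⟨i, hi⟩, maj_eq_some_iff.2 fun e he => ?_⟩
    rw [votes_eraseIdx_of_ne hi hbk]
    exact (votes_eraseIdx_le hi e).trans_lt (maj_eq_some_iff.1 hk e he)

lemma maj_ofFn_eraseIdx_of_eq_some {k : Fin m} (hk : Maj P = some k) (hP : 2 ≤ P.length) :
    Maj (ofFn fun l : Fin P.length => Maj (P.eraseIdx l)) = some k := by
  refine paretoOptimal_maj _ k (count_pos_iff.2 (mem_ofFn.2 (exists_maj_eraseIdx_eq_some hk hP)))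
    fun l hl => count_eq_zero.2 fun hmem => ?_
  obtain ⟨i, hi⟩ := mem_ofFn.1 hmem
  exact hl (eq_of_maj_eraseIdx_eq_some i.2 hk hi)

def IsTopTie (P : Profile m) (c d : Fin m) : Prop :=
  c ≠ d ∧ votes P c = votes P d ∧ ∀ e, e ≠ c → e ≠ d → votes P e < votes P c

lemma exists_isTopTie_of_maj_eraseIdx (hP : Maj P = none) (hi : i < P.length) {c : Fin m}
    (hc : Maj (P.eraseIdx i) = some c) : ∃ d, IsTopTie P c d := by
  obtain ⟨d, hdc, hcd⟩ := maj_eq_none_iff.1 hP c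
  have hlt := maj_eq_some_iff.1 hc d hdc
  have hc_le := votes_eraseIdx_le hi c
  have hPi : P[i] = some d := by
    by_contra h
    rw [votes_eraseIdx_of_ne hi h] at hlt
    omega
  have hd := votes_eraseIdx_add_one hi hPi
  refine ⟨d, Ne.symm hdc, by omega, fun e hec hed => ?_⟩
  have he := maj_eq_some_iff.1 hc e hec
  rw [votes_eraseIdx_of_ne hi (by simpa [hPi] using Ne.symm hed)] at he
  omega

lemma IsTopTie.getElem_eq_of_maj_eraseIdx {c d : Fin m} (h : IsTopTie P c d)
    (hi : i < P.length) (hc : Maj (P.eraseIdx i) = some c) : P[i] = some d := by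
  by_contra hne
  have := maj_eq_some_iff.1 hc d h.1.symm
  have := votes_eraseIdx_le hi c
  have := votes_eraseIdx_of_ne hi hne
  have := h.2.1
  omega

lemma IsTopTie.maj_eraseIdx_eq_some {c d : Fin m} (h : IsTopTie P c d)
    (hi : i < P.length) (hPi : P[i] = some c) : Maj (P.eraseIdx i) = some d := by
  obtain ⟨hcd, hvotes, hrest⟩ := h
  refine maj_eq_some_iff.2 fun e hed => ?_
  rw [votes_eraseIdx_of_ne (c := d) hi (by simpa [hPi] using hcd)]
  by_cases hec : e = c
  · subst hec
    have := votes_eraseIdx_add_one hi hPi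
    omega
  · exact (votes_eraseIdx_le hi e).trans_lt (hvotes ▸ hrest e hec hed)

lemma maj_ofFn_eraseIdx_of_eq_none (hP : Maj P = none) :
    Maj (ofFn fun l : Fin P.length => Maj (P.eraseIdx l)) = none := by
  set Q := ofFn fun l : Fin P.length => Maj (P.eraseIdx l)
  refine Option.eq_none_iff_forall_ne_some.2 fun c hc => ?_
  obtain ⟨e, hec, -⟩ := maj_eq_none_iff.1 hP c
  obtain ⟨l, hl⟩ := mem_ofFn.1 (mem_of_maj_eq_some hc hec)
  obtain ⟨d, htie⟩ := exists_isTopTie_of_maj_eraseIdx hP l.2 hl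
  have hQc : votes Q c ≤ votes P d := by
    conv_rhs => rw [votes, ← ofFn_getElem (xs := P)]
    exact count_ofFn_le_count_ofFn fun l hl => htie.getElem_eq_of_maj_eraseIdx l.2 hl
  have hQd : votes P c ≤ votes Q d := by
    conv_lhs => rw [votes, ← ofFn_getElem (xs := P)]
    exact count_ofFn_le_count_ofFn fun l hl => htie.maj_eraseIdx_eq_some l.2 hl
  have := maj_eq_some_iff.1 hc d htie.1.symm
  have := htie.2.1
  omega

theorem reducible_maj : Reducible (Maj (m := m)) := by
  intro P hP
  cases h : Maj P with
  | none => exact (maj_ofFn_eraseIdx_of_eq_none h).symm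
  | some k => exact (maj_ofFn_eraseIdx_of_eq_some h hP).symm

end Reducible

end

theorem stmt_4_general (m : ℕ) :
    Anonymous (Maj (m := m)) ∧ Neutral (Maj (m := m)) ∧
    DuelProperty (Maj (m := m)) ∧ ParetoOptimal (Maj (m := m)) ∧
    Reducible (Maj (m := m)) :=
  ⟨anonymous_maj, neutral_maj, duelProperty_maj, paretoOptimal_maj, reducible_maj⟩

/-- For every `m ≥ 2`, the majority rule satisfies (A), (N), (DP),
(PO) and (RS). -/
theorem stmt_4 (m : ℕ) (hm : 2 ≤ m) :
    Anonymous (Maj (m := m)) ∧ Neutral (Maj (m := m)) ∧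
    DuelProperty (Maj (m := m)) ∧ ParetoOptimal (Maj (m := m)) ∧
    Reducible (Maj (m := m)) :=
  stmt_4_general m
end

section
/- Let f be a social choice function for m ≥ 2 candidates satisfying anonymity (A), neutrality (N), the duel property (DP) and reducibility to subsocieties (RS). Let n ≥ 2 and suppose f(Q) = Maj(Q) for every profile Q of length n−1. If P is a profile of length n admitting a dominating tie, i.e., there exist distinct candidates i, j such that Σ_i(P) = Σ_j(P) > Σ_k(P) for every candidate k ∉ {i, j}, then f(P) = none. -/
/-!
Removing one ballot from a profile with a dominating tie between `i` and `j` leaves a profile of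
length `n - 1`, on which `f` is the majority rule: removing a vote for `i` makes `j` win, removing
a vote for `j` makes `i` win, and removing any other ballot keeps the tie. So by (RS) `f P` is the
outcome of the profile obtained from `P` by turning votes for `i` into votes for `j` and back, and
every other ballot into an abstention. This profile is a duel between `i` and `j` with equally
many votes for both, hence a permutation of its image under the transposition `(i j)`; by (A) and
(N) its outcome is fixed by `(i j)`, and by (DP) the only such outcome is a tie.
-/

variable {m : ℕ}

lemma votes_eq_votes_eraseIdx_add {P : Profile m} {l : ℕ} (hl : l < P.length) (k : Fin m) :
    votes P k = votes (P.eraseIdx l) k + if P[l] = some k then 1 else 0 := by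
  rw [votes, votes, ← (List.getElem_cons_eraseIdx_perm hl).count_eq, List.count_cons]
  simp

lemma maj_eq_some {Q : Profile m} {k : Fin m} (h : ∀ l, l ≠ k → votes Q l < votes Q k) :
    Maj Q = some k := by
  have hex : ∃ k : Fin m, ∀ l, l ≠ k → votes Q l < votes Q k := ⟨k, h⟩
  rw [Maj, dif_pos hex, Option.some_inj]
  by_contra hne
  exact lt_asymm (h _ hne) (hex.choose_spec k (Ne.symm hne))

lemma maj_eq_none_of_tie {Q : Profile m} {i j : Fin m} (hij : i ≠ j)
    (htie : votes Q i = votes Q j) (hmax : ∀ k, votes Q k ≤ votes Q i) : Maj Q = none := by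
  rw [Maj, dif_neg]
  rintro ⟨k, hk⟩
  rcases eq_or_ne k i with rfl | hki
  · exact (hk j hij.symm).ne' htie
  · exact (hk i hki.symm).not_ge (hmax k)

/-- The majority outcome of a profile with a dominating tie between `i` and `j` after
ballot `b` is removed. -/
def subsocietyOutcome (i j : Fin m) : Option (Fin m) → Option (Fin m)
  | some k => if k = i then some j else if k = j then some i else none
  | none => none

lemma subsocietyOutcome_comm {i j : Fin m} (hij : i ≠ j) :
    subsocietyOutcome i j = subsocietyOutcome j i := by
  funext b
  rcases b with _ | k
  · rfl
  · by_cases hki : k = i <;> by_cases hkj : k = j <;> simp_all [subsocietyOutcome]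

lemma subsocietyOutcome_eq_some_left_iff {i j : Fin m} (hij : i ≠ j) (b : Option (Fin m)) :
    subsocietyOutcome i j b = some i ↔ b = some j := by
  rcases b with _ | k
  · simp [subsocietyOutcome]
  · by_cases hki : k = i <;> by_cases hkj : k = j <;> simp_all [subsocietyOutcome, eq_comm]

lemma subsocietyOutcome_mem_duel (i j : Fin m) (b : Option (Fin m)) :
    subsocietyOutcome i j b = none ∨ subsocietyOutcome i j b = some i ∨
      subsocietyOutcome i j b = some j := by
  rcases b with _ | k
  · simp [subsocietyOutcome]
  · simp only [subsocietyOutcome]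
    split_ifs <;> simp

lemma votes_map_subsocietyOutcome_left {i j : Fin m} (hij : i ≠ j) (P : Profile m) :
    votes (P.map (subsocietyOutcome i j)) i = votes P j := by
  simp only [votes, List.count_eq_countP, List.countP_map]
  exact List.countP_congr fun b _ => by
    simpa using subsocietyOutcome_eq_some_left_iff hij b

structure DominatingTie (P : Profile m) (i j : Fin m) : Prop where
  ne : i ≠ j
  votes_eq : votes P i = votes P j
  votes_lt : ∀ k, k ≠ i → k ≠ j → votes P k < votes P i

namespace DominatingTie

variable {P : Profile m} {i j : Fin m} {l : ℕ}

lemma symm (h : DominatingTie P i j) : DominatingTie P j i :=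
  ⟨h.ne.symm, h.votes_eq.symm, fun k hkj hki => h.votes_eq ▸ h.votes_lt k hki hkj⟩

lemma maj_eraseIdx_of_getElem_eq_left (h : DominatingTie P i j) (hl : l < P.length)
    (hb : P[l] = some i) : Maj (P.eraseIdx l) = some j := by
  have hv := votes_eq_votes_eraseIdx_add hl
  refine maj_eq_some fun k hkj => ?_
  have hvj : votes (P.eraseIdx l) j = votes P j := by simpa [hb, h.ne] using (hv j).symm
  rw [hvj, ← h.votes_eq]
  have hvk := hv k
  rcases eq_or_ne k i with rfl | hki
  · simp only [hb, if_true] at hvk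
    omega
  · have := h.votes_lt k hki hkj
    omega

lemma maj_eraseIdx_of_getElem_ne (h : DominatingTie P i j) (hl : l < P.length)
    (hi : P[l] ≠ some i) (hj : P[l] ≠ some j) : Maj (P.eraseIdx l) = none := by
  have hv := votes_eq_votes_eraseIdx_add hl
  have hvi : votes (P.eraseIdx l) i = votes P i := by simpa [hi] using (hv i).symm
  have hvj : votes (P.eraseIdx l) j = votes P j := by simpa [hj] using (hv j).symm
  refine maj_eq_none_of_tie h.ne (by rw [hvi, hvj, h.votes_eq]) fun k => ?_
  have hvk := hv k
  rw [hvi]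
  rcases eq_or_ne k i with rfl | hki
  · omega
  rcases eq_or_ne k j with rfl | hkj
  · have := h.votes_eq
    omega
  · have := h.votes_lt k hki hkj
    omega

lemma maj_eraseIdx (h : DominatingTie P i j) (hl : l < P.length) :
    Maj (P.eraseIdx l) = subsocietyOutcome i j P[l] := by
  by_cases hi : P[l] = some i
  · rw [h.maj_eraseIdx_of_getElem_eq_left hl hi, hi]
    simp [subsocietyOutcome]
  by_cases hj : P[l] = some j
  · rw [h.symm.maj_eraseIdx_of_getElem_eq_left hl hj, hj, subsocietyOutcome_comm h.ne]
    simp [subsocietyOutcome]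
  · rw [h.maj_eraseIdx_of_getElem_ne hl hi hj]
    rcases hb : P[l] with _ | k
    · rfl
    · have hki : k ≠ i := fun hk => hi (hk ▸ hb)
      have hkj : k ≠ j := fun hk => hj (hk ▸ hb)
      simp [subsocietyOutcome, hki, hkj]

lemma ofFn_subsocieties_eq_map {f : Profile m → Option (Fin m)} (h : DominatingTie P i j)
    (hf : ∀ Q : Profile m, Q.length = P.length - 1 → f Q = Maj Q) :
    List.ofFn (fun l : Fin P.length => f (P.eraseIdx l)) = P.map (subsocietyOutcome i j) := by
  refine List.ext_getElem (by simp) fun l hl _ => ?_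
  rw [List.length_ofFn] at hl
  rw [List.getElem_ofFn, List.getElem_map, hf _ (List.length_eraseIdx_of_lt hl),
    h.maj_eraseIdx hl]

end DominatingTie

lemma map_swap_perm_of_votes_eq {Q : Profile m} {i j : Fin m} (h : votes Q i = votes Q j) :
    (Q.map (Option.map (Equiv.swap i j))).Perm Q := by
  have hσ : Function.Involutive (Option.map (Equiv.swap i j)) := fun b => by cases b <;> simp
  refine List.perm_iff_count.2 fun c => ?_
  nth_rw 1 [← hσ c]
  rw [List.count_map_of_injective _ _ hσ.injective]
  rcases c with _ | k
  · rfl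
  · simp only [Option.map_some, Equiv.swap_apply_def]
    split_ifs with hki hkj
    · exact (hki ▸ h).symm
    · exact hkj ▸ h
    · rfl

lemma eq_none_of_balanced_duel {f : Profile m → Option (Fin m)} (hA : Anonymous f)
    (hN : Neutral f) (hDP : DuelProperty f) {Q : Profile m} {i j : Fin m} (hij : i ≠ j)
    (hQ : ∀ b ∈ Q, b = none ∨ b = some i ∨ b = some j) (hbal : votes Q i = votes Q j) :
    f Q = none := by
  have hfix : Option.map (Equiv.swap i j) (f Q) = f Q := by
    rw [← hN, hA _ _ (map_swap_perm_of_votes_eq hbal)]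
  rcases hDP i j Q hQ with hQ | hQ | hQ
  · exact hQ
  · simp [hQ, hij.symm] at hfix
  · simp [hQ, hij] at hfix

theorem stmt_6_general (m : ℕ) (f : Profile m → Option (Fin m))
    (hA : Anonymous f) (hN : Neutral f) (hDP : DuelProperty f) (hRS : Reducible f)
    (n : ℕ) (hn : 2 ≤ n)
    (hInd : ∀ Q : Profile m, Q.length = n - 1 → f Q = Maj Q)
    (P : Profile m) (hP : P.length = n)
    (i j : Fin m) (hij : i ≠ j)
    (htie : votes P i = votes P j)
    (hdom : ∀ k : Fin m, k ≠ i → k ≠ j → votes P k < votes P i) :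
    f P = none := by
  subst hP
  have hT : DominatingTie P i j := ⟨hij, htie, hdom⟩
  rw [hRS P hn, hT.ofFn_subsocieties_eq_map hInd]
  refine eq_none_of_balanced_duel hA hN hDP hij ?_ ?_
  · simpa using fun b _ => subsocietyOutcome_mem_duel i j b
  · rw [votes_map_subsocietyOutcome_left hij, subsocietyOutcome_comm hij,
      votes_map_subsocietyOutcome_left hij.symm, htie]

/-- dominating tie case: under (A), (N), (DP), (RS) and the inductive
hypothesis that `f` agrees with `Maj` on all profiles of length `n - 1`, any profile
of length `n` with a dominating tie results in a tie. -/
theorem stmt_6 (m : ℕ) (hm : 2 ≤ m) (f : Profile m → Option (Fin m))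
    (hA : Anonymous f) (hN : Neutral f) (hDP : DuelProperty f) (hRS : Reducible f)
    (n : ℕ) (hn : 2 ≤ n)
    (hInd : ∀ Q : Profile m, Q.length = n - 1 → f Q = Maj Q)
    (P : Profile m) (hP : P.length = n)
    (i j : Fin m) (hij : i ≠ j)
    (htie : votes P i = votes P j)
    (hdom : ∀ k : Fin m, k ≠ i → k ≠ j → votes P k < votes P i) :
    f P = none :=
  stmt_6_general m f hA hN hDP hRS n hn hInd P hP i j hij htie hdom
end

section
/- For m ≥ 2, the social choice function f1 defined by f1(P) = none if all ballots of P are abstentions, and f1(P) = some k* where k* is the smallest candidate index with Σ_{k*}(P) > 0 otherwise, satisfies anonymity (A), the duel property (DP), Pareto optimality (PO) and reducibility to subsocieties (RS), but does not satisfy neutrality (N). -/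
/-- The rule `f1`: `none` if all ballots are abstentions, and otherwise the smallest
candidate index receiving at least one vote. -/
noncomputable def f1 {m : ℕ} (P : Profile m) : Option (Fin m) :=
  if h : ∃ k : Fin m, 0 < votes P k
  then some ((Finset.univ.filter fun k : Fin m => 0 < votes P k).min'
      ⟨h.choose, Finset.mem_filter.mpr ⟨Finset.mem_univ _, h.choose_spec⟩⟩)
  else none

/-!
`f1 P` is the least candidate named by some ballot of `P`. The winner is named in `P`, which
gives (DP), and `f1 P` depends only on the set of named candidates; more
precisely it does not change when we pass to a profile naming fewer candidates that still names
the old winner. This gives (A), and also (RS): every sub-society's outcome is named in `P`, and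
with at least two voters one of them can be removed without losing every vote for the winner.
Neutrality fails because under anonymity `[0, 1]` and its image `[1, 0]` under the transposition
`(0 1)` must have the same outcome, which neutrality forbids from being `0`; but `f1` chooses `0`.
-/

section

variable {m : ℕ}

lemma votes_pos_iff {P : Profile m} {k : Fin m} : 0 < votes P k ↔ some k ∈ P :=
  List.count_pos_iff

lemma f1_eq_none_iff {P : Profile m} : f1 P = none ↔ ∀ k : Fin m, some k ∉ P := by
  simp [f1, votes_pos_iff]

lemma f1_eq_some_iff {P : Profile m} {k : Fin m} :
    f1 P = some k ↔ some k ∈ P ∧ ∀ j : Fin m, some j ∈ P → k ≤ j := by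
  unfold f1
  split_ifs with h
  · generalize_proofs
    rw [Option.some_inj, Finset.min'_eq_iff]
    simp [votes_pos_iff]
  · simp only [not_exists, not_lt, nonpos_iff_eq_zero] at h
    simp [← votes_pos_iff, h]

lemma mem_of_f1_eq_some {P : Profile m} {k : Fin m} (h : f1 P = some k) : some k ∈ P :=
  (f1_eq_some_iff.1 h).1

lemma f1_eq_of_subset {P Q : Profile m} (hsub : ∀ k : Fin m, some k ∈ Q → some k ∈ P)
    (hwin : ∀ k : Fin m, f1 P = some k → some k ∈ Q) : f1 Q = f1 P := by
  cases hP : f1 P with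
  | none => exact f1_eq_none_iff.2 fun k hk => f1_eq_none_iff.1 hP k (hsub k hk)
  | some k => exact f1_eq_some_iff.2 ⟨hwin k hP, fun j hj => (f1_eq_some_iff.1 hP).2 j (hsub j hj)⟩

lemma List.exists_mem_eraseIdx {α : Type*} {P : List α} {x : α} (hx : x ∈ P)
    (hP : 2 ≤ P.length) : ∃ l < P.length, x ∈ P.eraseIdx l := by
  obtain _ | ⟨a, _ | ⟨b, rest⟩⟩ := P
  · simp at hP
  · simp at hP
  · obtain rfl | hx := List.mem_cons.1 hx
    · exact ⟨1, by simp, by simp⟩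
    · exact ⟨0, by simp, hx⟩

lemma Anonymous.apply_pair_ne_some_left {f : Profile m → Option (Fin m)} (hA : Anonymous f)
    (hN : Neutral f) {a b : Fin m} (hab : a ≠ b) : f [some a, some b] ≠ some a := by
  intro h
  have hswap : f [some a, some b] = Option.map (Equiv.swap a b) (f [some a, some b]) := by
    rw [← hN, hA _ _ (List.Perm.swap (some b) (some a) [])]
    simp
  rw [h, Option.map_some, Equiv.swap_apply_left, Option.some_inj] at hswap
  exact hab hswap

lemma f1_anonymous : Anonymous (f1 (m := m)) := fun _ _ hp =>
  (f1_eq_of_subset (fun _ => hp.mem_iff.2) fun _ hk => hp.mem_iff.1 (mem_of_f1_eq_some hk)).symm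

lemma f1_duelProperty : DuelProperty (f1 (m := m)) := by
  intro i j P hb
  cases hP : f1 P with
  | none => exact Or.inl rfl
  | some k => simpa using hb _ (mem_of_f1_eq_some hP)

lemma f1_paretoOptimal : ParetoOptimal (f1 (m := m)) := by
  intro P k hk hl
  refine f1_eq_some_iff.2 ⟨votes_pos_iff.1 hk, fun j hj => le_of_eq ?_⟩
  by_contra hjk
  exact (votes_pos_iff.2 hj).ne' (hl j (Ne.symm hjk))

lemma f1_reducible : Reducible (f1 (m := m)) := by
  intro P hP
  have hsub : ∀ (l : ℕ) (k : Fin m), some k ∈ P.eraseIdx l → some k ∈ P := fun l _ hk =>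
    (List.eraseIdx_sublist P l).subset hk
  refine (f1_eq_of_subset ?_ ?_).symm
  · simp only [List.mem_ofFn, forall_exists_index]
    exact fun k l hl => hsub l k (mem_of_f1_eq_some hl)
  · intro k hk
    obtain ⟨l, hl, hkl⟩ := List.exists_mem_eraseIdx (mem_of_f1_eq_some hk) hP
    refine List.mem_ofFn.2 ⟨⟨l, hl⟩, ?_⟩
    rw [← hk]
    exact f1_eq_of_subset (hsub l) fun j hj => Option.some_inj.1 (hk.symm.trans hj) ▸ hkl

lemma f1_pair_of_le {a b : Fin m} (hab : a ≤ b) : f1 [some a, some b] = some a :=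
  f1_eq_some_iff.2 ⟨by simp, by simpa using hab⟩

end

/-- `f1` satisfies (A), (DP), (PO) and (RS), but not (N). -/
theorem stmt_8 (m : ℕ) (hm : 2 ≤ m) :
    Anonymous (f1 (m := m)) ∧ DuelProperty (f1 (m := m)) ∧
    ParetoOptimal (f1 (m := m)) ∧ Reducible (f1 (m := m)) ∧
    ¬ Neutral (f1 (m := m)) := by
  refine ⟨f1_anonymous, f1_duelProperty, f1_paretoOptimal, f1_reducible, fun hN => ?_⟩
  have h01 : (⟨0, by omega⟩ : Fin m) ≠ ⟨1, by omega⟩ := by simp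
  exact f1_anonymous.apply_pair_ne_some_left hN h01 (f1_pair_of_le (Fin.mk_le_mk.2 zero_le_one))
end

section
/- For m ≥ 2, the unanimity consent rule UC, defined by UC(P) = some k if Σ_k(P) > 0 and Σ_l(P) = 0 for every candidate l ≠ k, and UC(P) = none otherwise, satisfies anonymity (A), neutrality (N), the duel property (DP) and Pareto optimality (PO), but does not satisfy reducibility to subsocieties (RS). -/
/-- The unanimity consent rule `UC`: `some k` if `k` gets at least one vote and no
other candidate gets any vote, and `none` otherwise. -/
noncomputable def UC {m : ℕ} (P : Profile m) : Option (Fin m) :=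
  if h : ∃ k : Fin m, 0 < votes P k ∧ ∀ l : Fin m, l ≠ k → votes P l = 0
  then some h.choose else none

section UC

variable {m : ℕ}

theorem UC_eq_some_iff_votes {P : Profile m} {k : Fin m} :
    UC P = some k ↔ 0 < votes P k ∧ ∀ l, l ≠ k → votes P l = 0 := by
  unfold UC
  split_ifs with h
  · obtain ⟨hpos, hzero⟩ := h.choose_spec
    refine ⟨fun hk => Option.some_injective _ hk ▸ ⟨hpos, hzero⟩, fun ⟨hkpos, hkzero⟩ => ?_⟩
    by_contra hne
    exact hpos.ne' (hkzero _ fun heq => hne (congrArg some heq))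
  · exact ⟨nofun, fun hk => (h ⟨k, hk⟩).elim⟩

theorem UC_eq_some_iff {P : Profile m} {k : Fin m} :
    UC P = some k ↔ some k ∈ P ∧ ∀ l, l ≠ k → some l ∉ P := by
  simp only [UC_eq_some_iff_votes, votes, List.count_pos_iff, List.count_eq_zero]

theorem UC_eq_none_of_mem {P : Profile m} {a b : Fin m} (hab : a ≠ b)
    (ha : some a ∈ P) (hb : some b ∈ P) : UC P = none := by
  rw [Option.eq_none_iff_forall_ne_some]
  intro k hk
  obtain ⟨hk, hothers⟩ := UC_eq_some_iff.1 hk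
  by_cases hak : a = k
  · exact hothers b (hak ▸ hab.symm) hb
  · exact hothers a hak ha

theorem some_mem_map_optionMap_iff (τ : Equiv.Perm (Fin m)) (P : Profile m) (k : Fin m) :
    some k ∈ P.map (Option.map τ) ↔ some (τ.symm k) ∈ P := by
  conv_lhs => rw [← τ.apply_symm_apply k, ← Option.map_some]
  exact List.mem_map_of_injective (Option.map_injective τ.injective)

theorem anonymous_UC : Anonymous (UC (m := m)) := fun P P' hperm =>
  Option.ext fun k => by simp only [UC_eq_some_iff, hperm.mem_iff]

theorem neutral_UC : Neutral (UC (m := m)) := by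
  intro τ P
  refine Option.ext fun k => ?_
  have hmap : Option.map τ (UC P) = some k ↔ UC P = some (τ.symm k) := by
    simp only [Option.map_eq_some_iff, ← τ.eq_symm_apply, exists_eq_right]
  rw [hmap, UC_eq_some_iff, UC_eq_some_iff, some_mem_map_optionMap_iff]
  refine and_congr_right' (τ.symm.forall_congr fun l => ?_)
  rw [some_mem_map_optionMap_iff, τ.symm.injective.ne_iff]

theorem duelProperty_UC : DuelProperty (UC (m := m)) := by
  intro i j P hP
  rcases h : UC P with _ | k
  · exact .inl rfl
  · simpa using (hP _ (UC_eq_some_iff.1 h).1).resolve_left (Option.some_ne_none k)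

theorem paretoOptimal_UC : ParetoOptimal (UC (m := m)) :=
  fun _ _ hpos hzero => UC_eq_some_iff_votes.2 ⟨hpos, hzero⟩

theorem not_reducible_UC {a b : Fin m} (hab : a ≠ b) : ¬ Reducible (UC (m := m)) := by
  intro hRS
  -- Dropping an `a`-voter from `[a, a, b]` leaves a split vote and dropping the `b`-voter a
  -- unanimous one, so the reduced profile elects `a` although the full profile is a tie.
  have htie : UC [some a, some a, some b] = none := UC_eq_none_of_mem hab (by simp) (by simp)
  have hsplit : UC [some a, some b] = none := UC_eq_none_of_mem hab (by simp) (by simp)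
  have hunanimous : UC [some a, some a] = some a := UC_eq_some_iff.2 ⟨by simp, by simp⟩
  have hreduced : UC [none, none, some a] = some a := UC_eq_some_iff.2 ⟨by simp, by simp⟩
  have := hRS [some a, some a, some b] (by simp)
  simp [List.ofFn_succ, htie, hsplit, hunanimous, hreduced] at this

end UC

/-- the unanimity consent rule `UC` satisfies (A), (N), (DP) and (PO),
but not (RS). -/
theorem stmt_10 (m : ℕ) (hm : 2 ≤ m) :
    Anonymous (UC (m := m)) ∧ Neutral (UC (m := m)) ∧
    DuelProperty (UC (m := m)) ∧ ParetoOptimal (UC (m := m)) ∧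
    ¬ Reducible (UC (m := m)) :=
  ⟨anonymous_UC, neutral_UC, duelProperty_UC, paretoOptimal_UC,
    not_reducible_UC (a := ⟨0, by omega⟩) (b := ⟨1, hm⟩) (by simp)⟩
end

section
/- For m ≥ 2, the axioms of neutrality (N), Pareto optimality (PO) and reducibility to subsocieties (RS) are independent: there exist anonymous social choice functions f1, f2, f3 for m candidates such that f1 satisfies (A), (DP), (PO) and (RS) but not (N); f2 satisfies (A), (N), (DP) and (RS) but not (PO); and f3 satisfies (A), (N), (DP) and (PO) but not (RS). -/
/-!
All three rules look only at the set of candidates receiving at least one vote.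
`f₁` elects the lowest-numbered such candidate. It is reducible because removing a voter
never adds a candidate, and with at least two voters some voter other than one of the
winner's can be removed; it is not neutral because an anonymous, neutral rule with the
duel property must declare a tie in a two-voter duel.
`f₂` always declares a tie.
`f₃` elects a candidate only if nobody else receives a vote. On the profile `(i, i, j)` it
declares a tie, yet its subsocieties produce `(tie, tie, i)`, which elects `i`.
-/

lemma List.exists_mem_eraseIdx_s11 {α : Type*} {l : List α} {b : α} (hl : 2 ≤ l.length)
    (hb : b ∈ l) : ∃ i < l.length, b ∈ l.eraseIdx i := by
  obtain ⟨j, hj, rfl⟩ := List.mem_iff_getElem.1 hb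
  refine ⟨if j = 0 then 1 else 0, by split_ifs <;> omega, ?_⟩
  exact List.mem_eraseIdx_iff_getElem.2 ⟨j, hj, by split_ifs <;> omega, rfl⟩

open Finset

namespace SocialChoice

section Choice

variable {α : Type*} [LinearOrder α]

noncomputable def least (s : Finset α) : Option α :=
  if h : s.Nonempty then some (s.min' h) else none

lemma least_eq_none {s : Finset α} : least s = none ↔ s = ∅ := by
  simp [least, Finset.nonempty_iff_ne_empty]

lemma mem_of_least_eq_some {s : Finset α} {k : α} (h : least s = some k) : k ∈ s := by
  unfold least at h
  split_ifs at h with hs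
  exact Option.some_inj.1 h ▸ min'_mem s hs

@[simp] lemma least_singleton (k : α) : least {k} = some k := by
  simp [least]

lemma least_eq_of_subset {s t : Finset α} (hst : s ⊆ t)
    (hmin : ∀ ht : t.Nonempty, t.min' ht ∈ s) : least s = least t := by
  by_cases ht : t.Nonempty
  · have hs : s.Nonempty := ⟨_, hmin ht⟩
    rw [least, least, dif_pos hs, dif_pos ht,
      le_antisymm (min'_le s _ (hmin ht)) (min'_subset hs hst)]
  · rw [not_nonempty_iff_eq_empty] at ht
    rw [ht] at hst ⊢
    rw [subset_empty.1 hst]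

noncomputable def unanimous (s : Finset α) : Option α :=
  if s.card = 1 then least s else none

lemma mem_of_unanimous_eq_some {s : Finset α} {k : α} (h : unanimous s = some k) :
    k ∈ s := by
  unfold unanimous at h
  split_ifs at h
  exact mem_of_least_eq_some h

@[simp] lemma unanimous_singleton (k : α) : unanimous {k} = some k := by
  simp [unanimous]

lemma unanimous_image (τ : Equiv.Perm α) (s : Finset α) :
    unanimous (s.image τ) = (unanimous s).map τ := by
  by_cases hs : s.card = 1
  · obtain ⟨k, rfl⟩ := card_eq_one.1 hs
    simp
  · rw [unanimous, unanimous, card_image_of_injective s τ.injective, if_neg hs, if_neg hs]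
    rfl

end Choice

variable {m : ℕ}

def support (P : Profile m) : Finset (Fin m) := univ.filter fun k => some k ∈ P

@[simp] lemma mem_support {P : Profile m} {k : Fin m} : k ∈ support P ↔ some k ∈ P := by
  simp [support]

@[simp] lemma support_nil : support ([] : Profile m) = ∅ := by
  ext; simp

@[simp] lemma support_cons_none (P : Profile m) : support (none :: P) = support P := by
  ext; simp

@[simp] lemma support_cons_some (k : Fin m) (P : Profile m) :
    support (some k :: P) = insert k (support P) := by
  ext; simp [eq_comm]

lemma support_eq_singleton {P : Profile m} {k : Fin m} (hk : 0 < votes P k)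
    (hl : ∀ l, l ≠ k → votes P l = 0) : support P = {k} := by
  ext l
  rw [mem_support, mem_singleton, ← List.count_pos_iff]
  exact ⟨fun h => by_contra fun hlk => h.ne' (hl l hlk), fun h => h ▸ hk⟩

lemma support_eraseIdx_subset (P : Profile m) (i : ℕ) : support (P.eraseIdx i) ⊆ support P :=
  fun _ hk => mem_support.2 ((P.eraseIdx_sublist i).subset (mem_support.1 hk))

lemma support_map (τ : Equiv.Perm (Fin m)) (P : Profile m) :
    support (P.map (Option.map τ)) = (support P).image τ := by
  ext k
  simp only [mem_support, List.mem_map, mem_image, Option.map_eq_some_iff]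
  constructor
  · rintro ⟨_, hb, a, rfl, rfl⟩
    exact ⟨a, hb, rfl⟩
  · rintro ⟨a, ha, rfl⟩
    exact ⟨some a, ha, a, rfl, rfl⟩

def ofSupport (g : Finset (Fin m) → Option (Fin m)) (P : Profile m) : Option (Fin m) :=
  g (support P)

lemma anonymous_ofSupport (g : Finset (Fin m) → Option (Fin m)) : Anonymous (ofSupport g) := by
  intro P P' h
  simp only [ofSupport]
  congr 1
  ext
  simp [h.mem_iff]

variable {g : Finset (Fin m) → Option (Fin m)}

lemma neutral_ofSupport (hg : ∀ (τ : Equiv.Perm (Fin m)) s, g (s.image τ) = (g s).map τ) :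
    Neutral (ofSupport g) :=
  fun τ P => by rw [ofSupport, support_map, hg]; rfl

lemma duelProperty_ofSupport (hg : ∀ s k, g s = some k → k ∈ s) :
    DuelProperty (ofSupport g) := by
  intro i j P hP
  rcases h : ofSupport g P with _ | k
  · exact .inl rfl
  · rcases hP _ (mem_support.1 (hg _ _ h)) with h' | h' | h' <;> simp_all

lemma paretoOptimal_ofSupport (hg : ∀ k, g {k} = some k) : ParetoOptimal (ofSupport g) :=
  fun _ _ hk hl => by rw [ofSupport, support_eq_singleton hk hl, hg]

lemma reducible_ofSupport_least : Reducible (ofSupport (least (α := Fin m))) := by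
  intro P hP
  have hsub : support (List.ofFn fun l : Fin P.length => ofSupport least (P.eraseIdx l))
      ⊆ support P := by
    intro k hk
    obtain ⟨l, hl⟩ := List.mem_ofFn.1 (mem_support.1 hk)
    exact support_eraseIdx_subset P l (mem_of_least_eq_some hl)
  refine (least_eq_of_subset hsub fun hne => ?_).symm
  obtain ⟨l, hl, hmem⟩ := List.exists_mem_eraseIdx_s11 hP (mem_support.1 (min'_mem _ hne))
  refine mem_support.2 (List.mem_ofFn.2 ⟨⟨l, hl⟩, ?_⟩)
  rw [ofSupport, least_eq_of_subset (support_eraseIdx_subset P l) fun _ => mem_support.2 hmem,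
    least, dif_pos hne]

lemma not_reducible_ofSupport_unanimous {i j : Fin m} (hij : i ≠ j) :
    ¬ Reducible (ofSupport (unanimous (α := Fin m))) := by
  intro h
  have := h [some i, some i, some j] (by simp)
  simp [ofSupport, unanimous, List.ofFn_succ, card_pair hij] at this

/-- Swapping the two candidates of a two-voter duel only swaps the voters. -/
lemma duel_eq_none_of_neutral {f : Profile m → Option (Fin m)} (hA : Anonymous f) (hN : Neutral f)
    (hD : DuelProperty f) {i j : Fin m} (hij : i ≠ j) : f [some i, some j] = none := by
  have hswap := hN (Equiv.swap i j) [some i, some j]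
  simp only [List.map_cons, List.map_nil, Option.map_some, Equiv.swap_apply_left,
    Equiv.swap_apply_right, hA _ _ (List.Perm.swap (some i) (some j) [])] at hswap
  rcases hD i j [some i, some j] (by simp) with h | h | h <;> rw [h] at hswap ⊢
  · simp [Equiv.swap_apply_left, hij] at hswap
  · simp [Equiv.swap_apply_right, hij.symm] at hswap

end SocialChoice

open SocialChoice in
/-- for `m ≥ 2`, the axioms (N), (PO) and (RS) are independent. -/
theorem stmt_11 (m : ℕ) (hm : 2 ≤ m) :
    ∃ f₁ f₂ f₃ : Profile m → Option (Fin m),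
      (Anonymous f₁ ∧ DuelProperty f₁ ∧ ParetoOptimal f₁ ∧ Reducible f₁ ∧ ¬ Neutral f₁) ∧
      (Anonymous f₂ ∧ Neutral f₂ ∧ DuelProperty f₂ ∧ Reducible f₂ ∧ ¬ ParetoOptimal f₂) ∧
      (Anonymous f₃ ∧ Neutral f₃ ∧ DuelProperty f₃ ∧ ParetoOptimal f₃ ∧ ¬ Reducible f₃) := by
  obtain ⟨i, j, hij⟩ := (Fin.nontrivial_iff_two_le.2 hm).exists_pair_ne
  have least_duel : DuelProperty (ofSupport (least (α := Fin m))) :=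
    duelProperty_ofSupport fun _ _ => mem_of_least_eq_some
  refine ⟨ofSupport least, fun _ => none, ofSupport unanimous,
    ⟨anonymous_ofSupport _, least_duel, paretoOptimal_ofSupport least_singleton,
      reducible_ofSupport_least, fun hN => ?_⟩,
    ⟨fun _ _ _ => rfl, fun _ _ => rfl, fun _ _ _ _ => .inl rfl, fun _ _ => rfl, fun hPO => ?_⟩,
    ⟨anonymous_ofSupport _, neutral_ofSupport unanimous_image,
      duelProperty_ofSupport fun _ _ => mem_of_unanimous_eq_some,
      paretoOptimal_ofSupport unanimous_singleton, not_reducible_ofSupport_unanimous hij⟩⟩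
  · have := duel_eq_none_of_neutral (anonymous_ofSupport _) hN least_duel hij
    simp [ofSupport, least_eq_none] at this
  · simpa using hPO [some i] i (by simp [votes]) fun l hl => by simp [votes, Ne.symm hl]
end
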